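/- arXiv:2008.00960 — 2 statements merged into one kernel-verified Lean document; each statement's English description precedes it below -/
import Mathlib

section
/- Decodability identity (used in the relaxed entropic LP of Proposition 2): for every (N,K) PIR scheme, every k ∈ {1, …, K} and every subset A ⊆ {1, …, N}, writing A^c = {1,…,N} \ A, one has H(S_A, A_{A^c}^[k] | F, W_{1:k−1}) = L + H(S_A, A_{A^c}^[k] | F, W_{1:k}). -/
/- Shannon entropy framework for finitely-valued random variables on a finite
probability space, and the definition of an (N,K) private information retrieval
(PIR) scheme. -/

open scoped Classical
open Finset

/-- `prob p X a` is the probability that the random variable `X` takes the value `a`,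
where `p` is the probability mass function on the finite sample space `Ω`. -/
noncomputable def prob {Ω α : Type} [Fintype Ω] (p : Ω → ℝ) (X : Ω → α) (a : α) : ℝ :=
  ∑ ω : Ω, if X ω = a then p ω else 0

/-- Shannon entropy (natural base) of a random variable `X` on a finite sample space. -/
noncomputable def ent {Ω α : Type} [Fintype Ω] (p : Ω → ℝ) (X : Ω → α) : ℝ :=
  ∑ a ∈ Finset.univ.image X, Real.negMulLog (prob p X a)

/-- Conditional Shannon entropy `H(X | Y) = H(X, Y) - H(Y)`. -/
noncomputable def condEnt {Ω α β : Type} [Fintype Ω] (p : Ω → ℝ) (X : Ω → α) (Y : Ω → β) : ℝ :=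
  ent p (fun ω => (X ω, Y ω)) - ent p Y

/-- An `(N, K)` private information retrieval scheme:
`K` mutually independent messages `W` with entropy `L` each, stored contents `S` at `N`
servers (deterministic functions of the messages), a random key `F` independent of the
messages, queries `Q` (deterministic functions of `F`), answers `A` (deterministic
functions of the query and the stored content, with an answer function not depending on
the desired index), correctness and privacy. Messages/servers are indexed `0, …, K-1`
and `0, …, N-1` (paper index `i` corresponds to index `i - 1` here). -/
structure PIRScheme (N K : ℕ) where
  Ω : Type
  [finΩ : Fintype Ω]
  Msg : Type
  Sto : Type
  Qry : Type
  Ans : Type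
  Key : Type
  p : Ω → ℝ
  p_nonneg : ∀ ω, 0 ≤ p ω
  p_sum : ∑ ω : Ω, p ω = 1
  L : ℝ
  L_pos : 0 < L
  W : Fin K → Ω → Msg
  S : Fin N → Ω → Sto
  F : Ω → Key
  Q : Fin K → Fin N → Ω → Qry
  A : Fin K → Fin N → Ω → Ans
  W_indep : ∀ w : Fin K → Msg,
    prob p (fun ω => (fun k => W k ω)) w = ∏ k : Fin K, prob p (W k) (w k)
  W_ent : ∀ k, ent p (W k) = L
  F_indep : ∀ (f : Key) (w : Fin K → Msg),
    prob p (fun ω => (F ω, fun k => W k ω)) (f, w)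
      = prob p F f * prob p (fun ω => (fun k => W k ω)) w
  S_det : ∀ n : Fin N, ∃ g : (Fin K → Msg) → Sto, ∀ ω, S n ω = g (fun k => W k ω)
  Q_det : ∀ (k : Fin K) (n : Fin N), ∃ g : Key → Qry, ∀ ω, Q k n ω = g (F ω)
  A_det : ∀ n : Fin N, ∃ φ : Qry → Sto → Ans, ∀ (k : Fin K) (ω : Ω), A k n ω = φ (Q k n ω) (S n ω)
  correct : ∀ k : Fin K, ∃ g : (Fin N → Ans) → (Fin N → Qry) → Msg,
    ∀ ω, W k ω = g (fun n => A k n ω) (fun n => Q k n ω)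
  privacy : ∀ (n : Fin N) (k k' : Fin K) (q : Qry),
    prob p (Q k n) q = prob p (Q k' n) q

attribute [instance] PIRScheme.finΩ

/-- The set of server (or message) indices `{i : i < m}`, i.e. paper indices `1, …, m`. -/
def finLt (N m : ℕ) : Finset (Fin N) := Finset.univ.filter (fun i => i.val < m)

/-- The set of server (or message) indices `{i : m ≤ i}`, i.e. paper indices `m+1, …, N`. -/
def finGe (N m : ℕ) : Finset (Fin N) := Finset.univ.filter (fun i => m ≤ i.val)

namespace PIRScheme

variable {N K : ℕ}

/-- Informational normalized storage cost `α = (1/(N L)) ∑ₙ H(Sₙ)`. -/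
noncomputable def alpha (s : PIRScheme N K) : ℝ :=
  (1 / (N * s.L)) * ∑ n : Fin N, ent s.p (s.S n)

/-- Informational normalized download cost for desired message `k`:
`(1/(N L)) ∑ₙ H(Aₙ^[k] | Q₁^[k], …, Q_N^[k])`.  The download cost `β` of the scheme is
`betaAt` at the first message. -/
noncomputable def betaAt (s : PIRScheme N K) (k : Fin K) : ℝ :=
  (1 / (N * s.L)) *
    ∑ n : Fin N, condEnt s.p (s.A k n) (fun ω => (fun n' : Fin N => s.Q k n' ω))

/-- The joint random variable `S_B = (Sₙ : n ∈ B)`. -/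
noncomputable def jointS (s : PIRScheme N K) (B : Finset (Fin N)) : s.Ω → (B → s.Sto) :=
  fun ω i => s.S i.1 ω

/-- The joint random variable `A_B^[k] = (Aₙ^[k] : n ∈ B)`. -/
noncomputable def jointA (s : PIRScheme N K) (k : Fin K) (B : Finset (Fin N)) :
    s.Ω → (B → s.Ans) :=
  fun ω i => s.A k i.1 ω

/-- The joint random variable `W_C = (Wₖ : k ∈ C)`. -/
noncomputable def jointW (s : PIRScheme N K) (C : Finset (Fin K)) : s.Ω → (C → s.Msg) :=
  fun ω i => s.W i.1 ω

/-- A scheme is symmetric if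
`H(S_A, A_B^[k] | F, W_C) = H(S_{π(A)}, A_{π(B)}^[π'(k)] | F, W_{π'(C)})` for all
permutations `π` of the servers and `π'` of the messages. -/
def Symmetric (s : PIRScheme N K) : Prop :=
  ∀ (A B : Finset (Fin N)) (C : Finset (Fin K)) (k : Fin K)
    (π : Equiv.Perm (Fin N)) (π' : Equiv.Perm (Fin K)),
    condEnt s.p (fun ω => (s.jointS A ω, s.jointA k B ω)) (fun ω => (s.F ω, s.jointW C ω))
      = condEnt s.p (fun ω => (s.jointS (A.image ⇑π) ω, s.jointA (π' k) (B.image ⇑π) ω))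
          (fun ω => (s.F ω, s.jointW (C.image ⇑π') ω))

end PIRScheme


section aux
variable {Ω : Type} [Fintype Ω] (p : Ω → ℝ)

lemma prob_le {α : Type} (hp : ∀ ω, 0 ≤ p ω) (X : Ω → α) (ω : Ω) :
    p ω ≤ prob p X (X ω) := by
  unfold prob
  have h := Finset.single_le_sum (f := fun ω' => if X ω' = X ω then p ω' else 0)
    (fun i _ => by by_cases h : X i = X ω <;> simp [h, hp i]) (Finset.mem_univ ω)
  simpa using h

lemma sum_prob_image {α : Type} (hs : ∑ ω, p ω = 1) (X : Ω → α) :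
    ∑ a ∈ Finset.univ.image X, prob p X a = 1 := by
  unfold prob
  rw [Finset.sum_comm, ← hs]
  refine Finset.sum_congr rfl fun ω _ => ?_
  rw [Finset.sum_ite_eq]
  simp

lemma ent_eq_sum {α : Type} (X : Ω → α) :
    ent p X = ∑ ω, p ω * (-Real.log (prob p X (X ω))) := by
  unfold ent
  have : ∀ a ∈ Finset.univ.image X, Real.negMulLog (prob p X a)
      = ∑ ω, (if X ω = a then p ω * (-Real.log (prob p X (X ω))) else 0) := by
    intro a _
    rw [Real.negMulLog, neg_mul]
    nth_rewrite 1 [prob]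
    rw [Finset.sum_mul, ← Finset.sum_neg_distrib]
    refine Finset.sum_congr rfl fun ω _ => ?_
    by_cases h : X ω = a
    · rw [if_pos h, if_pos h, h]; ring
    · rw [if_neg h, if_neg h]; ring
  rw [Finset.sum_congr rfl this, Finset.sum_comm]
  refine Finset.sum_congr rfl fun ω _ => ?_
  rw [Finset.sum_ite_eq]
  simp

lemma ent_congr {α β : Type} {X : Ω → α} {Y : Ω → β}
    (f : β → α) (g : α → β) (hf : ∀ ω, X ω = f (Y ω)) (hg : ∀ ω, Y ω = g (X ω)) :
    ent p X = ent p Y := by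
  rw [ent_eq_sum, ent_eq_sum]
  refine Finset.sum_congr rfl fun ω _ => ?_
  have hpr : prob p X (X ω) = prob p Y (Y ω) := by
    unfold prob
    refine Finset.sum_congr rfl fun ω' _ => ?_
    have hiff : X ω' = X ω ↔ Y ω' = Y ω := by
      constructor
      · intro h; rw [hg, hg, h]
      · intro h; rw [hf, hf, h]
    simp only [hiff]
  rw [hpr]

lemma ent_pair_of_indep {α β : Type} (hp : ∀ ω, 0 ≤ p ω)
    (X : Ω → α) (Y : Ω → β)
    (hind : ∀ ω, prob p (fun ω' => (X ω', Y ω')) (X ω, Y ω)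
      = prob p X (X ω) * prob p Y (Y ω)) :
    ent p (fun ω => (X ω, Y ω)) = ent p X + ent p Y := by
  rw [ent_eq_sum, ent_eq_sum, ent_eq_sum, ← Finset.sum_add_distrib]
  refine Finset.sum_congr rfl fun ω _ => ?_
  rcases eq_or_lt_of_le (hp ω) with h0 | h0
  · simp [← h0]
  · have hx : 0 < prob p X (X ω) := lt_of_lt_of_le h0 (prob_le p hp X ω)
    have hy : 0 < prob p Y (Y ω) := lt_of_lt_of_le h0 (prob_le p hp Y ω)
    rw [hind ω, Real.log_mul hx.ne' hy.ne']
    ring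

end aux

section fact
variable {N K : ℕ} (s : PIRScheme N K)

lemma prob_T (f : s.Key) (w : Fin K → s.Msg) :
    prob s.p (fun ω => (s.F ω, fun j => s.W j ω)) (f, w)
      = prob s.p s.F f * ∏ j, prob s.p (s.W j) (w j) := by
  rw [s.F_indep f w, s.W_indep w]

lemma prob_comp_eval {δ : Type} (G : s.Key → (Fin K → s.Msg) → δ) (b : δ) :
    prob s.p (fun ω => G (s.F ω) (fun j => s.W j ω)) b
      = ∑ f ∈ Finset.univ.image s.F,
          ∑ w ∈ Fintype.piFinset (fun j => Finset.univ.image (s.W j)),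
            (if G f w = b then prob s.p s.F f * ∏ j, prob s.p (s.W j) (w j) else 0) := by
  have key : ∀ f w, (if G f w = b then prob s.p s.F f * ∏ j, prob s.p (s.W j) (w j) else 0)
      = ∑ ω, (if s.F ω = f then if (fun j => s.W j ω) = w then
          (if G f w = b then s.p ω else 0) else 0 else 0) := by
    intro f w
    by_cases h : G f w = b
    · rw [if_pos h, ← prob_T s]
      unfold prob
      refine Finset.sum_congr rfl fun ω _ => ?_
      by_cases h1 : s.F ω = f
      · by_cases h2 : (fun j => s.W j ω) = w
        · simp [h1, h2, h, Prod.ext_iff]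
        · simp [h1, h2, Prod.ext_iff]
      · simp [h1, Prod.ext_iff]
    · rw [if_neg h]
      symm
      refine Finset.sum_eq_zero fun ω _ => ?_
      simp [h]
  calc prob s.p (fun ω => G (s.F ω) (fun j => s.W j ω)) b
      = ∑ ω, ∑ f ∈ Finset.univ.image s.F,
          ∑ w ∈ Fintype.piFinset (fun j => Finset.univ.image (s.W j)),
            (if s.F ω = f then if (fun j => s.W j ω) = w then
              (if G f w = b then s.p ω else 0) else 0 else 0) := by
        unfold prob
        refine Finset.sum_congr rfl fun ω _ => ?_
        rw [show (∑ f ∈ Finset.univ.image s.F,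
          ∑ w ∈ Fintype.piFinset (fun j => Finset.univ.image (s.W j)),
            (if s.F ω = f then if (fun j => s.W j ω) = w then
              (if G f w = b then s.p ω else 0) else 0 else 0))
          = ∑ f ∈ Finset.univ.image s.F, (if s.F ω = f then
              (∑ w ∈ Fintype.piFinset (fun j => Finset.univ.image (s.W j)),
                if (fun j => s.W j ω) = w then (if G f w = b then s.p ω else 0) else 0)
              else 0) from Finset.sum_congr rfl fun f _ => by split_ifs <;> simp]
        rw [Finset.sum_ite_eq, if_pos (Finset.mem_image_of_mem _ (Finset.mem_univ ω)),
          Finset.sum_ite_eq,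
          if_pos (Fintype.mem_piFinset.mpr fun j => Finset.mem_image_of_mem _ (Finset.mem_univ ω))]
    _ = ∑ f ∈ Finset.univ.image s.F,
          ∑ w ∈ Fintype.piFinset (fun j => Finset.univ.image (s.W j)),
            ∑ ω, (if s.F ω = f then if (fun j => s.W j ω) = w then
              (if G f w = b then s.p ω else 0) else 0 else 0) := by
        rw [Finset.sum_comm]
        exact Finset.sum_congr rfl fun f _ => Finset.sum_comm
    _ = _ := by
        refine Finset.sum_congr rfl fun f _ => Finset.sum_congr rfl fun w _ => ?_
        rw [key]

lemma sum_constrained (T : Finset (Fin K)) (ω0 : s.Ω) :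
    (∑ w ∈ Fintype.piFinset (fun j => Finset.univ.image (s.W j)),
      (if (∀ j ∈ T, w j = s.W j ω0) then ∏ j, prob s.p (s.W j) (w j) else 0))
    = ∏ j ∈ T, prob s.p (s.W j) (s.W j ω0) := by
  have step1 : ∀ w ∈ Fintype.piFinset (fun j => Finset.univ.image (s.W j)),
      (if (∀ j ∈ T, w j = s.W j ω0) then ∏ j, prob s.p (s.W j) (w j) else 0)
      = ∏ j, (if j ∈ T then (if w j = s.W j ω0 then prob s.p (s.W j) (w j) else 0)
          else prob s.p (s.W j) (w j)) := by
    intro w _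
    by_cases hc : ∀ j ∈ T, w j = s.W j ω0
    · rw [if_pos hc]
      refine Finset.prod_congr rfl fun j _ => ?_
      by_cases hj : j ∈ T
      · simp [hj, hc j hj]
      · simp [hj]
    · rw [if_neg hc]
      push_neg at hc
      obtain ⟨j, hj, hne⟩ := hc
      symm
      refine Finset.prod_eq_zero (Finset.mem_univ j) ?_
      simp [hj, hne]
  rw [Finset.sum_congr rfl step1,
    ← Finset.prod_univ_sum (t := fun j => Finset.univ.image (s.W j))
      (f := fun j a => if j ∈ T then (if a = s.W j ω0 then prob s.p (s.W j) a else 0)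
        else prob s.p (s.W j) a)]
  have step2 : ∀ j, (∑ a ∈ Finset.univ.image (s.W j),
      (if j ∈ T then (if a = s.W j ω0 then prob s.p (s.W j) a else 0)
        else prob s.p (s.W j) a))
      = (if j ∈ T then prob s.p (s.W j) (s.W j ω0) else 1) := by
    intro j
    by_cases hj : j ∈ T
    · simp only [if_pos hj]
      rw [Finset.sum_ite_eq', if_pos (Finset.mem_image_of_mem _ (Finset.mem_univ ω0))]
    · simp only [if_neg hj]
      exact sum_prob_image s.p s.p_sum (s.W j)
  rw [Finset.prod_congr rfl fun j _ => step2 j, Finset.prod_ite_mem, Finset.univ_inter]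

lemma prob_proj_factor (T : Finset (Fin K)) {δ : Type} (G : s.Key → (Fin K → s.Msg) → δ)
    (ω0 : s.Ω)
    (hG : ∀ f w, (G f w = G (s.F ω0) (fun j => s.W j ω0))
      ↔ (s.F ω0 = f ∧ ∀ j ∈ T, w j = s.W j ω0)) :
    prob s.p (fun ω => G (s.F ω) (fun j => s.W j ω)) (G (s.F ω0) (fun j => s.W j ω0))
      = prob s.p s.F (s.F ω0) * ∏ j ∈ T, prob s.p (s.W j) (s.W j ω0) := by
  rw [prob_comp_eval]
  have step : ∀ f ∈ Finset.univ.image s.F,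
      (∑ w ∈ Fintype.piFinset (fun j => Finset.univ.image (s.W j)),
        (if G f w = G (s.F ω0) (fun j => s.W j ω0)
          then prob s.p s.F f * ∏ j, prob s.p (s.W j) (w j) else 0))
      = (if s.F ω0 = f then prob s.p s.F f * ∏ j ∈ T, prob s.p (s.W j) (s.W j ω0) else 0) := by
    intro f _
    by_cases hf : s.F ω0 = f
    · rw [if_pos hf, ← sum_constrained s T ω0, Finset.mul_sum]
      refine Finset.sum_congr rfl fun w _ => ?_
      rw [hG]
      by_cases hw : ∀ j ∈ T, w j = s.W j ω0
      · simp [hf, hw]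
      · simp [hw]
    · rw [if_neg hf]
      refine Finset.sum_eq_zero fun w _ => ?_
      rw [hG]
      simp [hf]
  rw [Finset.sum_congr rfl step, Finset.sum_ite_eq,
    if_pos (Finset.mem_image_of_mem _ (Finset.mem_univ ω0))]

lemma prob_factor (C : Finset (Fin K)) (kk : Fin K) (hkk : kk ∉ C) (ω0 : s.Ω) :
    prob s.p (fun ω => ((s.F ω, s.jointW C ω), s.W kk ω))
        ((s.F ω0, s.jointW C ω0), s.W kk ω0)
      = prob s.p (fun ω => (s.F ω, s.jointW C ω)) (s.F ω0, s.jointW C ω0)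
        * prob s.p (s.W kk) (s.W kk ω0) := by
  have h3 := prob_proj_factor s (insert kk C)
    (fun f w => ((f, fun i : C => w i.1), w kk)) ω0 ?_
  · have h2 := prob_proj_factor s C (fun f w => (f, fun i : C => w i.1)) ω0 ?_
    · have hkkprob : prob s.p (s.W kk) (s.W kk ω0)
          = ∑ w ∈ Fintype.piFinset (fun j => Finset.univ.image (s.W j)), 0 + prob s.p (s.W kk) (s.W kk ω0) := by simp
      have e3 : prob s.p (fun ω => ((s.F ω, s.jointW C ω), s.W kk ω))
          ((s.F ω0, s.jointW C ω0), s.W kk ω0)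
          = prob s.p s.F (s.F ω0) * ∏ j ∈ insert kk C, prob s.p (s.W j) (s.W j ω0) := h3
      have e2 : prob s.p (fun ω => (s.F ω, s.jointW C ω)) (s.F ω0, s.jointW C ω0)
          = prob s.p s.F (s.F ω0) * ∏ j ∈ C, prob s.p (s.W j) (s.W j ω0) := h2
      rw [e3, e2, Finset.prod_insert hkk]
      ring
    · intro f w
      simp only [Prod.mk.injEq]
      constructor
      · rintro ⟨hf, hc⟩
        refine ⟨hf.symm, fun j hj => ?_⟩
        exact congrFun hc ⟨j, hj⟩
      · rintro ⟨hf, hall⟩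
        refine ⟨hf.symm, ?_⟩
        funext i
        exact hall i.1 i.2
  · intro f w
    simp only [Prod.mk.injEq]
    constructor
    · rintro ⟨⟨hf, hc⟩, hk⟩
      refine ⟨hf.symm, fun j hj => ?_⟩
      rcases Finset.mem_insert.mp hj with h | h
      · subst h; exact hk
      · exact congrFun hc ⟨j, h⟩
    · rintro ⟨hf, hall⟩
      exact ⟨⟨hf.symm, funext fun i => hall i.1 (Finset.mem_insert_of_mem i.2)⟩,
        hall kk (Finset.mem_insert_self _ _)⟩

lemma exists_decode (kk : Fin K) (A : Finset (Fin N)) :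
    ∃ G : ((A → s.Sto) × ((Aᶜ : Finset (Fin N)) → s.Ans)) → s.Key → s.Msg,
      ∀ ω, s.W kk ω = G (s.jointS A ω, s.jointA kk Aᶜ ω) (s.F ω) := by
  choose qg hqg using fun n => s.Q_det kk n
  choose φ hφ using s.A_det
  obtain ⟨dec, hdec⟩ := s.correct kk
  refine ⟨fun x f => dec (fun n => if h : n ∈ A then φ n (qg n f) (x.1 ⟨n, h⟩)
      else x.2 ⟨n, Finset.mem_compl.mpr h⟩) (fun n => qg n f), fun ω => ?_⟩
  rw [hdec ω]
  congr 1
  · funext n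
    by_cases h : n ∈ A
    · rw [dif_pos h, ← hqg n ω]
      exact hφ n kk ω
    · rw [dif_neg h]
      rfl
  · funext n
    exact hqg n ω

end fact


/-- Decodability identity: for `k ∈ {1,…,K}` (paper index; here message `k` is index
`k - 1`) and any `A ⊆ {1,…,N}`,
`H(S_A, A_{Aᶜ}^[k] | F, W_{1:k-1}) = L + H(S_A, A_{Aᶜ}^[k] | F, W_{1:k})`. -/
theorem stmt8 (N K : ℕ) (s : PIRScheme N K) (k : ℕ) (hk1 : 1 ≤ k) (hk2 : k ≤ K)
    (A : Finset (Fin N)) :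
    condEnt s.p
        (fun ω => (s.jointS A ω, s.jointA ⟨k - 1, by omega⟩ Aᶜ ω))
        (fun ω => (s.F ω, s.jointW (finLt K (k - 1)) ω))
      = s.L +
        condEnt s.p
          (fun ω => (s.jointS A ω, s.jointA ⟨k - 1, by omega⟩ Aᶜ ω))
          (fun ω => (s.F ω, s.jointW (finLt K k) ω)) := by
  have hkK : k - 1 < K := by omega
  set kk : Fin K := ⟨k - 1, hkK⟩ with hkkdef
  have mem_finLt : ∀ {m : ℕ} {i : Fin K}, i ∈ finLt K m ↔ i.val < m := by
    intro m i; simp [finLt]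
  set C0 := finLt K (k - 1) with hC0
  set C1 := finLt K k with hC1
  have hsub : ∀ i : Fin K, i ∈ C0 → i ∈ C1 := fun i hi =>
    mem_finLt.mpr (by have := mem_finLt.mp hi; omega)
  have hkk1 : kk ∈ C1 := mem_finLt.mpr (show k - 1 < k by omega)
  have hkk0 : kk ∉ C0 := fun h => by
    have : (k - 1 : ℕ) < k - 1 := mem_finLt.mp h
    omega
  have hc1kk : ∀ i : Fin K, i ∈ C1 → ¬(i.val < k - 1) → i = kk := fun i hi hno =>
    Fin.ext (by have h2 := mem_finLt.mp hi; show i.val = k - 1; omega)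
  obtain ⟨G, hG⟩ := exists_decode s kk A
  -- Claim A: adding W_kk to the conditioning tuple does not change the joint entropy
  have claimA : ent s.p (fun ω => ((s.jointS A ω, s.jointA kk Aᶜ ω),
        (s.F ω, s.jointW C1 ω)))
      = ent s.p (fun ω => ((s.jointS A ω, s.jointA kk Aᶜ ω),
        (s.F ω, s.jointW C0 ω))) := by
    refine ent_congr s.p
      (f := fun z => (z.1, (z.2.1, fun i : C1 =>
        if h : (i : Fin K).val < k - 1 then z.2.2 ⟨i.1, mem_finLt.mpr h⟩
        else G z.1 z.2.1)))
      (g := fun z => (z.1, (z.2.1, fun i : C0 => z.2.2 ⟨i.1, hsub _ i.2⟩)))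
      (fun ω => ?_) (fun ω => rfl)
    simp only [Prod.mk.injEq]
    refine ⟨by trivial, by trivial, ?_⟩
    funext i
    by_cases h : (i : Fin K).val < k - 1
    · rw [dif_pos h]
      rfl
    · rw [dif_neg h]
      show s.W i.1 ω = _
      rw [hc1kk i.1 i.2 h]
      exact hG ω
  -- Claim B: H(F, W_{1:k}) = H(F, W_{1:k-1}) + L
  have claimB1 : ent s.p (fun ω => ((s.F ω, s.jointW C0 ω), s.W kk ω))
      = ent s.p (fun ω => (s.F ω, s.jointW C1 ω)) := by
    refine ent_congr s.p
      (f := fun z => ((z.1, fun i : C0 => z.2 ⟨i.1, hsub _ i.2⟩), z.2 ⟨kk, hkk1⟩))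
      (g := fun z => (z.1.1, fun i : C1 =>
        if h : (i : Fin K).val < k - 1 then z.1.2 ⟨i.1, mem_finLt.mpr h⟩ else z.2))
      (fun ω => rfl) (fun ω => ?_)
    simp only [Prod.mk.injEq]
    refine ⟨by trivial, ?_⟩
    funext i
    by_cases h : (i : Fin K).val < k - 1
    · rw [dif_pos h]
      rfl
    · rw [dif_neg h]
      show s.W i.1 ω = _
      rw [hc1kk i.1 i.2 h]
  have claimB2 : ent s.p (fun ω => ((s.F ω, s.jointW C0 ω), s.W kk ω))
      = ent s.p (fun ω => (s.F ω, s.jointW C0 ω)) + s.L := by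
    rw [← s.W_ent kk]
    exact ent_pair_of_indep s.p s.p_nonneg _ _ (fun ω => prob_factor s C0 kk hkk0 ω)
  have claimB : ent s.p (fun ω => (s.F ω, s.jointW C1 ω))
      = ent s.p (fun ω => (s.F ω, s.jointW C0 ω)) + s.L := by
    rw [← claimB1, claimB2]
  simp only [condEnt]
  have e1 : (fun ω => ((s.jointS A ω, s.jointA (⟨k - 1, by omega⟩ : Fin K) Aᶜ ω),
      (s.F ω, s.jointW C0 ω)))
      = fun ω => ((s.jointS A ω, s.jointA kk Aᶜ ω), (s.F ω, s.jointW C0 ω)) := rfl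
  have e2 : (fun ω => ((s.jointS A ω, s.jointA (⟨k - 1, by omega⟩ : Fin K) Aᶜ ω),
      (s.F ω, s.jointW C1 ω)))
      = fun ω => ((s.jointS A ω, s.jointA kk Aᶜ ω), (s.F ω, s.jointW C1 ω)) := rfl
  rw [e1, e2, claimA, claimB]
  ring
end

section
/- Construction A (compressed two-server code): for every integer K ≥ 1 there exists a (2,K) PIR scheme (with binary messages, L = 1 bit) whose storage cost α and download cost β satisfy α ≤ K − 1/2 and β ≤ (2^K − 1)/2^K. -/
/- Shannon entropy framework for finitely-valued random variables on a finite
probability space, and the definition of an (N,K) private information retrieval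
(PIR) scheme. -/

open scoped Classical
open Finset

/-!
Both servers return the dot product of their stored vector with a query vector, and the two
query vectors `q₀, q₁` are the odd- and the even-weight element of `{v, v + eₖ}` for a uniform
`v`, so `q₀ ⬝ m + q₁ ⬝ m = mₖ`.  Since `q₁` has even weight it is orthogonal to the all-ones
vector, so the second server may store `m` only up to adding the all-ones vector, i.e. the
`K - 1` bits `m₀ + mⱼ`; this gives `α = (K + (K - 1)) / 2`.  Each server sees a uniform vector
of a fixed parity whatever `k` is, which is privacy.  Messages and stored contents are group
homomorphisms of a uniform variable, whose entropy is the logarithm of the size of the image.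
Given the queries, the answer of a server is a linear functional of the uniform messages and
so carries one bit unless the functional vanishes; for the second server this happens exactly
for `v ∈ {0, eₖ}`, whence `β = (1 + (1 - 2 / 2^K)) / 2`.
-/

section Entropy

variable {Ω α : Type} [Fintype Ω]

lemma le_prob_apply {p : Ω → ℝ} (hp : ∀ ω, 0 ≤ p ω) (X : Ω → α) (ω : Ω) :
    p ω ≤ prob p X (X ω) := by
  calc p ω = if X ω = X ω then p ω else 0 := by rw [if_pos rfl]
    _ ≤ prob p X (X ω) :=
      single_le_sum (f := fun ω' => if X ω' = X ω then p ω' else 0)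
        (fun ω' _ => by split_ifs <;> simp [hp]) (mem_univ ω)

lemma ent_eq_neg_sum_mul_log_prob (p : Ω → ℝ) (X : Ω → α) :
    ent p X = -∑ ω, p ω * Real.log (prob p X (X ω)) := by
  rw [← sum_fiberwise_of_maps_to (g := X) (t := univ.image X)
    (fun ω _ => mem_image_of_mem X (mem_univ ω)), ent, ← sum_neg_distrib]
  refine sum_congr rfl fun a _ => ?_
  rw [sum_congr rfl fun ω hω => by rw [(mem_filter.mp hω).2], ← sum_mul, sum_filter, ← prob,
    Real.negMulLog, neg_mul]

lemma ent_eq_neg_log_of_prob_eq {p : Ω → ℝ} (hp : ∑ ω, p ω = 1) {X : Ω → α} {c : ℝ}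
    (hc : ∀ ω, prob p X (X ω) = c) : ent p X = -Real.log c := by
  simp only [ent_eq_neg_sum_mul_log_prob, hc, ← sum_mul, hp, one_mul]

lemma ent_const {p : Ω → ℝ} (hp : ∑ ω, p ω = 1) (a : α) : ent p (fun _ => a) = 0 := by
  rw [ent_eq_neg_log_of_prob_eq hp (c := 1) fun _ => by simp [prob, hp], Real.log_one, neg_zero]

lemma prob_congr_event {β : Type} (p : Ω → ℝ) {X : Ω → α} {Y : Ω → β} {a : α} {b : β}
    (h : ∀ ω, X ω = a ↔ Y ω = b) : prob p X a = prob p Y b := by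
  simp only [prob, h]

lemma prob_comp_equiv {p : Ω → ℝ} (σ : Ω ≃ Ω) (hσ : ∀ ω, p (σ ω) = p ω) (X : Ω → α) (a : α) :
    prob p (X ∘ σ) a = prob p X a := by
  rw [prob, prob, ← σ.sum_comp (fun ω => if X ω = a then p ω else 0)]
  simp only [Function.comp, hσ]

end Entropy

section Product

variable {α β γ δ ε : Type} [Fintype α] [Fintype β]

lemma prob_fst (pα : α → ℝ) {pβ : β → ℝ} (hβ : ∑ b, pβ b = 1) (X : α → ε) (e : ε) :
    prob (fun ω : α × β => pα ω.1 * pβ ω.2) (fun ω => X ω.1) e = prob pα X e := by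
  simp [prob, Fintype.sum_prod_type, ← mul_sum, hβ]

lemma prob_snd {pα : α → ℝ} (hα : ∑ a, pα a = 1) (pβ : β → ℝ) (X : β → ε) (e : ε) :
    prob (fun ω : α × β => pα ω.1 * pβ ω.2) (fun ω => X ω.2) e = prob pβ X e := by
  simp [prob, Fintype.sum_prod_type, hα, ← sum_mul, Finset.sum_comm (γ := α)]

lemma prob_prod_mk (pα : α → ℝ) (pβ : β → ℝ) (X : α → γ) (Y : β → δ) (c : γ) (d : δ) :
    prob (fun ω : α × β => pα ω.1 * pβ ω.2) (fun ω => (X ω.1, Y ω.2)) (c, d)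
      = prob pα X c * prob pβ Y d := by
  simp only [prob, Prod.mk.injEq, ← ite_zero_mul_ite_zero, Fintype.sum_prod_type, sum_mul_sum]

lemma ent_snd {pα : α → ℝ} (hα : ∑ a, pα a = 1) (pβ : β → ℝ) (X : β → ε) :
    ent (fun ω : α × β => pα ω.1 * pβ ω.2) (fun ω => X ω.2) = ent pβ X := by
  rw [ent_eq_neg_sum_mul_log_prob, ent_eq_neg_sum_mul_log_prob, Fintype.sum_prod_type]
  simp only [prob_snd hα, mul_assoc]
  rw [← sum_mul_sum, hα, one_mul]

lemma condEnt_prod_eq_sum_mul_ent {pα : α → ℝ} {pβ : β → ℝ} (hα : ∀ a, 0 ≤ pα a)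
    (hβ : ∀ b, 0 ≤ pβ b) (hβ1 : ∑ b, pβ b = 1) (φ : α → γ) (g : γ → β → δ) :
    condEnt (fun ω : α × β => pα ω.1 * pβ ω.2) (fun ω => g (φ ω.1) ω.2) (fun ω => φ ω.1)
      = ∑ a, pα a * ent pβ (g (φ a)) := by
  have hjoint : ∀ ω : α × β,
      prob (fun ω : α × β => pα ω.1 * pβ ω.2) (fun ω => (g (φ ω.1) ω.2, φ ω.1))
          (g (φ ω.1) ω.2, φ ω.1)
        = prob pα φ (φ ω.1) * prob pβ (g (φ ω.1)) (g (φ ω.1) ω.2) := fun ω => by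
    rw [← prob_prod_mk, prob_congr_event]
    intro ω'
    simp only [Prod.mk.injEq]
    constructor
    · rintro ⟨hg, hφ⟩
      exact ⟨hφ, hφ ▸ hg⟩
    · rintro ⟨hφ, hg⟩
      exact ⟨hφ ▸ hg, hφ⟩
  have hsplit : ∀ ω : α × β, pα ω.1 * pβ ω.2 * Real.log
        (prob pα φ (φ ω.1) * prob pβ (g (φ ω.1)) (g (φ ω.1) ω.2))
      = pα ω.1 * pβ ω.2 * Real.log (prob pα φ (φ ω.1))
        + pα ω.1 * (pβ ω.2 * Real.log (prob pβ (g (φ ω.1)) (g (φ ω.1) ω.2))) := fun ω => by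
    rcases (hα ω.1).eq_or_lt with h0 | hpos
    · simp [← h0]
    rcases (hβ ω.2).eq_or_lt with h0 | hpos'
    · simp [← h0]
    rw [Real.log_mul (hpos.trans_le (le_prob_apply hα φ ω.1)).ne'
      (hpos'.trans_le (le_prob_apply hβ _ ω.2)).ne']
    ring
  rw [condEnt, ent_eq_neg_sum_mul_log_prob, ent_eq_neg_sum_mul_log_prob]
  simp only [hjoint, hsplit, prob_fst pα hβ1, sum_add_distrib, Fintype.sum_prod_type, ← mul_sum,
    ent_eq_neg_sum_mul_log_prob, mul_neg, sum_neg_distrib]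
  ring

end Product

noncomputable def uniform (α : Type) [Fintype α] : α → ℝ := fun _ => (Fintype.card α : ℝ)⁻¹

section Uniform

variable {α : Type} [Fintype α]

lemma uniform_nonneg (a : α) : 0 ≤ uniform α a := by
  unfold uniform
  positivity

lemma sum_uniform [Nonempty α] : ∑ a, uniform α a = 1 := by
  simp [uniform, Fintype.card_pos.ne']

variable {G H : Type} [AddGroup G] [Fintype G] [AddGroup H]

lemma prob_uniform_addMonoidHom (f : G →+ H) (g : G) :
    prob (uniform G) f (f g) = (Nat.card f.range : ℝ)⁻¹ := by
  have hfiber : #{x | f x = f g} = #{x | f x = 0} :=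
    AddMonoidHom.card_fiber_eq_of_mem_range f ⟨g, rfl⟩ ⟨0, map_zero f⟩
  have hker : #{x | f x = 0} * Nat.card f.range = Fintype.card G := by
    rw [← AddSubgroup.index_ker f, ← Fintype.card_subtype, ← Nat.card_eq_fintype_card,
      ← Nat.card_eq_fintype_card, ← f.ker.card_mul_index]
    rfl
  have hpos : (#{x | f x = 0} : ℝ) ≠ 0 := by exact_mod_cast (card_pos.mpr ⟨0, by simp⟩).ne'
  rw [prob, ← sum_filter]
  simp only [uniform]
  rw [sum_const, nsmul_eq_mul, hfiber, ← hker]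
  push_cast
  rw [mul_inv, ← mul_assoc, mul_inv_cancel₀ hpos, one_mul]

lemma ent_uniform_addMonoidHom (f : G →+ H) :
    ent (uniform G) f = Real.log (Nat.card f.range) := by
  rw [ent_eq_neg_log_of_prob_eq sum_uniform (prob_uniform_addMonoidHom f), Real.log_inv, neg_neg]

lemma prob_uniform_of_surjective {f : G →+ H} (hf : Function.Surjective f) (h : H) :
    prob (uniform G) f h = (Nat.card H : ℝ)⁻¹ := by
  obtain ⟨g, rfl⟩ := hf h
  rw [prob_uniform_addMonoidHom, AddMonoidHom.range_eq_top.mpr hf, AddSubgroup.card_top]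

lemma ent_uniform_of_surjective {f : G →+ H} (hf : Function.Surjective f) :
    ent (uniform G) f = Real.log (Nat.card H) := by
  rw [ent_uniform_addMonoidHom, AddMonoidHom.range_eq_top.mpr hf, AddSubgroup.card_top]

end Uniform

namespace ZMod

lemma eq_zero_or_eq_one (a : ZMod 2) : a = 0 ∨ a = 1 := by
  revert a
  decide

lemma eq_add_one_of_ne {a b : ZMod 2} (h : a ≠ b) : a = b + 1 := by
  revert a b
  decide

end ZMod

abbrev Bits (K : ℕ) := Fin K → ZMod 2

namespace Bits

variable {K : ℕ}

lemma neg_eq (v : Bits K) : -v = v :=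
  funext fun j => ZMod.neg_eq_self_mod_two (v j)

lemma add_eq_zero_iff {v w : Bits K} : v + w = 0 ↔ v = w := by
  rw [add_eq_zero_iff_eq_neg, neg_eq]

lemma add_self (v : Bits K) : v + v = 0 :=
  add_eq_zero_iff.mpr rfl

def parity (v : Bits K) : ZMod 2 := ∑ j, v j

lemma parity_add (v w : Bits K) : parity (v + w) = parity v + parity w :=
  sum_add_distrib

lemma parity_single (k : Fin K) : parity (Pi.single k 1) = 1 := by
  simp [parity, sum_pi_single']

lemma parity_zero : parity (0 : Bits K) = 0 := by
  simp [parity]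

lemma parity_single_add_single (k k' : Fin K) :
    parity (Pi.single k 1 + Pi.single k' 1 : Bits K) = 0 := by
  rw [parity_add, parity_single, parity_single]
  decide

lemma dotProduct_const_add (q m : Bits K) (a : ZMod 2) :
    q ⬝ᵥ (fun j => a + m j) = parity q * a + q ⬝ᵥ m := by
  simp only [dotProduct, mul_add, sum_add_distrib, parity, sum_mul]

lemma uniform_apply (v : Bits K) : uniform (Bits K) v = (2 ^ K)⁻¹ := by
  simp [uniform]

lemma prob_uniform_id (m : Bits K) : prob (uniform (Bits K)) (fun m => m) m = (2 ^ K)⁻¹ := by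
  have := prob_uniform_of_surjective (f := AddMonoidHom.id (Bits K)) Function.surjective_id m
  rwa [Nat.card_fun, Nat.card_zmod, Nat.card_fin, Nat.cast_pow, Nat.cast_ofNat] at this

lemma prob_uniform_eval (k : Fin K) (a : ZMod 2) :
    prob (uniform (Bits K)) (fun m => m k) a = 2⁻¹ := by
  have := prob_uniform_of_surjective (f := Pi.evalAddMonoidHom (fun _ => ZMod 2) k)
    (Function.surjective_eval k) a
  rwa [Nat.card_zmod, Nat.cast_ofNat] at this

lemma ent_uniform_eval (k : Fin K) : ent (uniform (Bits K)) (fun m => m k) = Real.log 2 := by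
  have := ent_uniform_of_surjective (f := Pi.evalAddMonoidHom (fun _ => ZMod 2) k)
    (Function.surjective_eval k)
  rwa [Nat.card_zmod, Nat.cast_ofNat] at this

lemma surjective_dotProduct {t : Bits K} (ht : t ≠ 0) : Function.Surjective (t ⬝ᵥ ·) := by
  obtain ⟨j, hj⟩ := Function.ne_iff.mp ht
  have h1 : t j = 1 := (ZMod.eq_zero_or_eq_one _).resolve_left hj
  exact fun b => ⟨Pi.single j b, show t ⬝ᵥ _ = b by rw [dotProduct_single, h1, one_mul]⟩

lemma ent_uniform_dotProduct (t : Bits K) :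
    ent (uniform (Bits K)) (t ⬝ᵥ ·) = if t = 0 then 0 else Real.log 2 := by
  split_ifs with ht
  · simp only [ht, zero_dotProduct]
    exact ent_const sum_uniform 0
  · have := ent_uniform_of_surjective (f := AddMonoidHom.mk' (t ⬝ᵥ ·) (dotProduct_add t))
      (surjective_dotProduct ht)
    rwa [Nat.card_zmod, Nat.cast_ofNat] at this

end Bits

namespace ConstructionA

open Bits

section Queries

variable {K : ℕ}

/-- The element of `{v, v + eₖ}` of parity `c + 1`. -/
def query (k : Fin K) (c : ZMod 2) (v : Bits K) : Bits K :=
  if parity v = c then v + Pi.single k 1 else v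

lemma parity_query (k : Fin K) (c : ZMod 2) (v : Bits K) : parity (query k c v) = c + 1 := by
  unfold query
  split_ifs with h
  · rw [parity_add, parity_single, h]
  · exact ZMod.eq_add_one_of_ne h

lemma query_zero_ne_zero (k : Fin K) (v : Bits K) : query k 0 v ≠ 0 := fun h => by
  simpa [parity_zero] using (parity_query k 0 v).symm.trans (congrArg parity h)

lemma query_zero_add_query_one (k : Fin K) (v : Bits K) :
    query k 0 v + query k 1 v = Pi.single k 1 := by
  rcases ZMod.eq_zero_or_eq_one (parity v) with h | h
  · simp only [query, h, if_pos, zero_ne_one, if_false]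
    rw [add_right_comm, add_self, zero_add]
  · simp only [query, h, if_pos, one_ne_zero, if_false]
    rw [← add_assoc, add_self, zero_add]

lemma query_one_eq_zero_iff (k : Fin K) (v : Bits K) :
    query k 1 v = 0 ↔ v = 0 ∨ v = Pi.single k 1 := by
  unfold query
  constructor
  · split_ifs
    · exact fun h => Or.inr (add_eq_zero_iff.mp h)
    · exact Or.inl
  · rintro (rfl | rfl)
    · simp [parity_zero]
    · simp [parity_single, add_self]

lemma card_filter_query_one_eq_zero (k : Fin K) : #{v | query k 1 v = 0} = 2 := by
  have h : ({v | query k 1 v = 0} : Finset (Bits K)) = {0, Pi.single k 1} := by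
    ext v
    simp [query_one_eq_zero_iff]
  rw [h, card_pair (Pi.single_ne_zero_iff.mpr one_ne_zero).symm]

def shiftOnParity (k k' : Fin K) (c : ZMod 2) (v : Bits K) : Bits K :=
  if parity v = c then v + (Pi.single k 1 + Pi.single k' 1) else v

lemma parity_shiftOnParity (k k' : Fin K) (c : ZMod 2) (v : Bits K) :
    parity (shiftOnParity k k' c v) = parity v := by
  unfold shiftOnParity
  split_ifs
  · rw [parity_add, parity_single_add_single, add_zero]
  · rfl

lemma shiftOnParity_involutive (k k' : Fin K) (c : ZMod 2) :
    Function.Involutive (shiftOnParity k k' c) := fun v => by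
  by_cases hv : parity v = c
  · have hv' := (parity_shiftOnParity k k' c v).trans hv
    rw [show shiftOnParity k k' c v = _ from if_pos hv] at hv' ⊢
    rw [shiftOnParity, if_pos hv', add_assoc, add_self, add_zero]
  · rw [show shiftOnParity k k' c v = v from if_neg hv, shiftOnParity, if_neg hv]

lemma query_comp_shiftOnParity (k k' : Fin K) (c : ZMod 2) :
    query k' c ∘ shiftOnParity k k' c = query k c := funext fun v => by
  have h := parity_shiftOnParity k k' c v
  simp only [Function.comp, query, h]
  unfold shiftOnParity
  split_ifs <;> simp [add_assoc, add_self]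

lemma prob_uniform_query (k k' : Fin K) (c : ZMod 2) (q : Bits K) :
    prob (uniform (Bits K)) (query k c) q = prob (uniform (Bits K)) (query k' c) q := by
  rw [← query_comp_shiftOnParity k k' c]
  exact prob_comp_equiv (shiftOnParity_involutive k k' c).toPerm (fun _ => rfl) _ q

end Queries

variable {K : ℕ} [NeZero K]

/-- Coordinate `0` of `diffFirst m` is `m₀ + m₀ = 0`, so it stores exactly the `K - 1` bits
`W₁ ⊕ W₂, …, W₁ ⊕ W_K`. -/
def diffFirst : Bits K →+ Bits K :=
  AddMonoidHom.mk' (fun m j => m 0 + m j) fun m m' => funext fun j => by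
    simp only [Pi.add_apply]
    abel

lemma mem_range_diffFirst (t : Bits K) :
    t ∈ (diffFirst : Bits K →+ Bits K).range ↔ t 0 = 0 := by
  constructor
  · rintro ⟨m, rfl⟩
    exact CharTwo.add_self_eq_zero (m 0)
  · exact fun h => ⟨t, funext fun j => by simp [diffFirst, h]⟩

lemma two_mul_card_range_diffFirst : 2 * Nat.card (diffFirst : Bits K →+ Bits K).range = 2 ^ K := by
  have hrange : (diffFirst : Bits K →+ Bits K).range
      = (Pi.evalAddMonoidHom (fun _ => ZMod 2) (0 : Fin K)).ker := by
    ext t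
    rw [mem_range_diffFirst]
    rfl
  have hindex : (Pi.evalAddMonoidHom (fun _ => ZMod 2) (0 : Fin K)).ker.index = 2 := by
    rw [AddSubgroup.index_ker, AddMonoidHom.range_eq_top.mpr (Function.surjective_eval _),
      AddSubgroup.card_top, Nat.card_zmod]
  calc 2 * Nat.card (diffFirst : Bits K →+ Bits K).range
      = Nat.card (Pi.evalAddMonoidHom (fun _ => ZMod 2) (0 : Fin K)).ker
          * (Pi.evalAddMonoidHom (fun _ => ZMod 2) (0 : Fin K)).ker.index := by
        rw [hrange, hindex, mul_comm]
    _ = 2 ^ K := by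
        rw [AddSubgroup.card_mul_index, Nat.card_fun, Nat.card_zmod, Nat.card_fin]

lemma dotProduct_diffFirst {q : Bits K} (hq : parity q = 0) (m : Bits K) :
    q ⬝ᵥ diffFirst m = q ⬝ᵥ m := by
  rw [show diffFirst m = fun j => m 0 + m j from rfl, dotProduct_const_add, hq, zero_mul,
    zero_add]

lemma query_zero_dotProduct_add_query_one_dotProduct_diffFirst (k : Fin K) (v m : Bits K) :
    query k 0 v ⬝ᵥ m + query k 1 v ⬝ᵥ diffFirst m = m k := by
  rw [dotProduct_diffFirst (by rw [parity_query]; decide), ← add_dotProduct,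
    query_zero_add_query_one, single_dotProduct, one_mul]

def storage (n : Fin 2) : Bits K →+ Bits K :=
  if n = 0 then AddMonoidHom.id _ else diffFirst

lemma storage_zero_apply (m : Bits K) : storage 0 m = m := by
  rw [storage, if_pos rfl, AddMonoidHom.id_apply]

lemma storage_one_apply (m : Bits K) : storage 1 m = diffFirst m := by
  rw [storage, if_neg Fin.zero_ne_one.symm]

lemma ent_uniform_storage_zero : ent (uniform (Bits K)) (storage 0) = K * Real.log 2 := by
  rw [storage, if_pos rfl, ent_uniform_of_surjective Function.surjective_id, Nat.card_fun,
    Nat.card_zmod, Nat.card_fin]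
  push_cast
  rw [Real.log_pow]

lemma ent_uniform_storage_one : ent (uniform (Bits K)) (storage 1) = (K - 1) * Real.log 2 := by
  have hcard : (Nat.card (diffFirst : Bits K →+ Bits K).range : ℝ) = 2 ^ K / 2 := by
    rw [eq_div_iff two_ne_zero, mul_comm]
    exact_mod_cast two_mul_card_range_diffFirst
  rw [storage, if_neg Fin.zero_ne_one.symm, ent_uniform_addMonoidHom, hcard,
    Real.log_div (by positivity) two_ne_zero, Real.log_pow]
  ring

variable (K) in
noncomputable def scheme : PIRScheme 2 K where
  Ω := Bits K × Bits K
  Msg := ZMod 2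
  Sto := Bits K
  Qry := Bits K
  Ans := ZMod 2
  Key := Bits K
  p ω := uniform _ ω.1 * uniform _ ω.2
  p_nonneg ω := mul_nonneg (uniform_nonneg _) (uniform_nonneg _)
  p_sum := by simp only [Fintype.sum_prod_type, ← sum_mul_sum, sum_uniform, one_mul]
  L := Real.log 2
  L_pos := Real.log_pos one_lt_two
  W k ω := ω.2 k
  S n ω := storage n ω.2
  F ω := ω.1
  Q k n ω := query k (n : ℕ) ω.1
  A k n ω := query k (n : ℕ) ω.1 ⬝ᵥ storage n ω.2
  W_indep w := by
    have hk : ∀ k, prob (fun ω : Bits K × Bits K => uniform _ ω.1 * uniform _ ω.2)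
        (fun ω => ω.2 k) (w k) = 2⁻¹ := fun k =>
      (prob_snd (sum_uniform (α := Bits K)) _ (fun m : Bits K => m k) (w k)).trans
        (prob_uniform_eval k (w k))
    rw [prob_snd (sum_uniform (α := Bits K)) _ (fun m => m) w, prob_uniform_id,
      prod_congr rfl fun k _ => hk k, prod_const, card_univ, Fintype.card_fin, inv_pow]
  W_ent k := by
    have h := ent_snd (sum_uniform (α := Bits K)) (uniform (Bits K)) (fun m : Bits K => m k)
    rwa [ent_uniform_eval] at h
  F_indep f w := by
    have h := prob_prod_mk (uniform (Bits K)) (uniform (Bits K)) id id f w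
    rwa [← prob_fst (uniform (Bits K)) (sum_uniform (α := Bits K)) id f,
      ← prob_snd (sum_uniform (α := Bits K)) (uniform (Bits K)) id w] at h
  S_det n := ⟨storage n, fun _ => rfl⟩
  Q_det k n := ⟨query k (n : ℕ), fun _ => rfl⟩
  A_det n := ⟨fun q s => q ⬝ᵥ s, fun _ _ => rfl⟩
  correct k := ⟨fun a _ => a 0 + a 1, fun ω => by
    simpa [storage] using
      (query_zero_dotProduct_add_query_one_dotProduct_diffFirst k ω.1 ω.2).symm⟩
  privacy n k k' q := by
    simp only [prob_fst _ (sum_uniform (α := Bits K))]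
    exact prob_uniform_query k k' _ q

lemma ent_scheme_S (n : Fin 2) :
    ent (scheme K).p ((scheme K).S n) = ent (uniform (Bits K)) (storage n) :=
  ent_snd (sum_uniform (α := Bits K)) (uniform (Bits K)) (storage n)

lemma scheme_alpha : (scheme K).alpha = K - 1 / 2 := by
  have hlog : Real.log 2 ≠ 0 := (Real.log_pos one_lt_two).ne'
  rw [PIRScheme.alpha, Fin.sum_univ_two, ent_scheme_S, ent_scheme_S, ent_uniform_storage_zero,
    ent_uniform_storage_one, show (scheme K).L = Real.log 2 from rfl]
  field_simp
  ring

lemma condEnt_scheme_A (k : Fin K) (n : Fin 2) :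
    condEnt (scheme K).p ((scheme K).A k n) (fun ω n' => (scheme K).Q k n' ω)
      = ∑ v, uniform (Bits K) v *
          ent (uniform (Bits K)) (fun m => query k (n : ℕ) v ⬝ᵥ storage n m) :=
  condEnt_prod_eq_sum_mul_ent uniform_nonneg uniform_nonneg sum_uniform
    (fun v (n' : Fin 2) => query k (n' : ℕ) v) (fun q m => q n ⬝ᵥ storage n m)

lemma condEnt_scheme_A_zero (k : Fin K) :
    condEnt (scheme K).p ((scheme K).A k 0) (fun ω n' => (scheme K).Q k n' ω) = Real.log 2 := by
  have hent : ∀ v, ent (uniform (Bits K))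
      (fun m => query k ((0 : Fin 2) : ℕ) v ⬝ᵥ storage 0 m) = Real.log 2 := fun v => by
    simp only [Fin.val_zero, Nat.cast_zero, storage_zero_apply]
    rw [ent_uniform_dotProduct, if_neg (query_zero_ne_zero k v)]
  rw [condEnt_scheme_A, sum_congr rfl fun v _ => by rw [hent v], ← sum_mul, sum_uniform, one_mul]

lemma condEnt_scheme_A_one (k : Fin K) :
    condEnt (scheme K).p ((scheme K).A k 1) (fun ω n' => (scheme K).Q k n' ω)
      = (1 - 2 / 2 ^ K) * Real.log 2 := by
  have hent : ∀ v, ent (uniform (Bits K))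
      (fun m => query k ((1 : Fin 2) : ℕ) v ⬝ᵥ storage 1 m)
        = Real.log 2 - if query k 1 v = 0 then Real.log 2 else 0 := fun v => by
    have hpar : parity (query k 1 v) = 0 := by
      rw [parity_query]
      decide
    simp only [Fin.val_one, Nat.cast_one, storage_one_apply, dotProduct_diffFirst hpar]
    rw [ent_uniform_dotProduct]
    split_ifs <;> ring
  simp only [condEnt_scheme_A, hent, mul_sub, mul_ite, mul_zero, sum_sub_distrib, ← sum_filter,
    uniform_apply]
  rw [sum_const, sum_const, card_filter_query_one_eq_zero, card_univ, Fintype.card_fun,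
    ZMod.card, Fintype.card_fin, nsmul_eq_mul, nsmul_eq_mul]
  push_cast
  field_simp

lemma scheme_betaAt (k : Fin K) : (scheme K).betaAt k = (2 ^ K - 1) / 2 ^ K := by
  have hlog : Real.log 2 ≠ 0 := (Real.log_pos one_lt_two).ne'
  rw [PIRScheme.betaAt, Fin.sum_univ_two, condEnt_scheme_A_zero, condEnt_scheme_A_one]
  change 1 / (2 * Real.log 2) * _ = _
  field_simp
  ring

end ConstructionA

/-- Construction A (compressed two-server code): for every `K ≥ 1` there is a `(2,K)`
PIR scheme with binary messages (`L = log 2`, i.e. one bit in natural-log units) whose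
costs satisfy `α ≤ K - 1/2` and `β ≤ (2^K - 1)/2^K`. -/
theorem stmt17 (K : ℕ) (hK : 1 ≤ K) :
    ∃ s : PIRScheme 2 K, s.L = Real.log 2 ∧
      s.alpha ≤ (K : ℝ) - 1 / 2 ∧
      s.betaAt ⟨0, by omega⟩ ≤ ((2 : ℝ) ^ K - 1) / 2 ^ K := by
  have : NeZero K := ⟨by omega⟩
  exact ⟨ConstructionA.scheme K, rfl, ConstructionA.scheme_alpha.le,
    (ConstructionA.scheme_betaAt _).le⟩
end
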